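/- arXiv:2509.21095 — 2 statements merged into one kernel-verified Lean document; each statement's English description precedes it below -/
import Mathlib

section
/- For all σ ≥ 0, all ρ with 0 ≤ ρ ≤ 1, and all ξ₁, ξ₂ ∈ ℝ, one has e^{σ|ξ₁|} e^{σ|ξ₂|} − e^{σ|ξ₁+ξ₂|} ≤ (2σ·min{|ξ₁|, |ξ₂|})^ρ · e^{σ|ξ₁|} e^{σ|ξ₂|}. -/
/-- For all `σ ≥ 0`, `0 ≤ ρ ≤ 1` and `ξ₁, ξ₂ ∈ ℝ`:
`e^{σ|ξ₁|} e^{σ|ξ₂|} − e^{σ|ξ₁+ξ₂|} ≤ (2σ·min{|ξ₁|,|ξ₂|})^ρ · e^{σ|ξ₁|} e^{σ|ξ₂|}`. -/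
theorem exp_mul_sub_exp_le (σ ρ ξ₁ ξ₂ : ℝ) (hσ : 0 ≤ σ) (hρ₀ : 0 ≤ ρ) (hρ₁ : ρ ≤ 1) :
    Real.exp (σ * |ξ₁|) * Real.exp (σ * |ξ₂|) - Real.exp (σ * |ξ₁ + ξ₂|) ≤
      (2 * σ * min (|ξ₁|) (|ξ₂|)) ^ ρ *
        (Real.exp (σ * |ξ₁|) * Real.exp (σ * |ξ₂|)) := by
  set A := σ * |ξ₁| + σ * |ξ₂| with hA
  set B := σ * |ξ₁ + ξ₂| with hB
  set x := 2 * σ * min (|ξ₁|) (|ξ₂|) with hx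
  have hEA : Real.exp (σ * |ξ₁|) * Real.exp (σ * |ξ₂|) = Real.exp A := by
    rw [hA, Real.exp_add]
  rw [hEA]
  have hx0 : 0 ≤ x := by positivity
  have hBA : B ≤ A := by
    rw [hA, hB, ← mul_add]
    exact mul_le_mul_of_nonneg_left (abs_add_le _ _) hσ
  have hdx : A - B ≤ x := by
    have h1 : |ξ₁| + |ξ₂| - |ξ₁ + ξ₂| ≤ 2 * min (|ξ₁|) (|ξ₂|) := by
      have a := abs_sub_abs_le_abs_sub ξ₁ (-ξ₂)
      have b := abs_sub_abs_le_abs_sub ξ₂ (-ξ₁)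
      simp only [sub_neg_eq_add, abs_neg] at a b
      rw [add_comm ξ₂ ξ₁] at b
      rcases min_cases (|ξ₁|) (|ξ₂|) with ⟨h, _⟩ | ⟨h, _⟩ <;> rw [h] <;> linarith
    calc A - B = σ * (|ξ₁| + |ξ₂| - |ξ₁ + ξ₂|) := by rw [hA, hB]; ring
      _ ≤ σ * (2 * min (|ξ₁|) (|ξ₂|)) := mul_le_mul_of_nonneg_left h1 hσ
      _ = x := by rw [hx]; ring
  rcases le_or_gt 1 x with h1 | h1
  · have hx1 : 1 ≤ x ^ ρ := Real.one_le_rpow h1 hρ₀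
    nlinarith [Real.exp_pos B, Real.exp_pos A]
  · have hxr : x ≤ x ^ ρ := by
      rcases eq_or_lt_of_le hx0 with h0 | h0
      · rcases eq_or_lt_of_le hρ₀ with hr0 | hr0
        · rw [← h0, ← hr0, Real.rpow_zero]; linarith
        · rw [← h0, Real.zero_rpow (ne_of_gt hr0)]
      · calc x = x ^ (1:ℝ) := (Real.rpow_one x).symm
          _ ≤ x ^ ρ := Real.rpow_le_rpow_of_exponent_ge h0 h1.le hρ₁
    have key : (1 - x) * Real.exp A ≤ Real.exp B := by
      have h2 : 1 + (B - A) ≤ Real.exp (B - A) := by linarith [Real.add_one_le_exp (B - A)]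
      have h3 : (1 + (B - A)) * Real.exp A ≤ Real.exp (B - A) * Real.exp A :=
        mul_le_mul_of_nonneg_right h2 (Real.exp_pos A).le
      rw [← Real.exp_add, sub_add_cancel] at h3
      have h4 : (1 - x) * Real.exp A ≤ (1 + (B - A)) * Real.exp A :=
        mul_le_mul_of_nonneg_right (by linarith) (Real.exp_pos A).le
      linarith
    nlinarith [Real.exp_pos A]
end

section
/- For every ρ with 0 ≤ ρ ≤ 1 there is a constant C_ρ > 0 (one may take C_ρ = 4^ρ) such that for all σ ≥ 0 and all ξ₁, ξ₂ ∈ ℝ: e^{σ|ξ₁|} e^{σ|ξ₂|} − e^{σ|ξ₁+ξ₂|} ≤ C_ρ · σ^ρ · (1+|ξ₁|)^ρ (1+|ξ₂|)^ρ (1+|ξ₁+ξ₂|)^{−ρ} · e^{σ|ξ₁|} e^{σ|ξ₂|}. -/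
open Real

private lemma one_sub_exp_le (ρ t : ℝ) (hρ₀ : 0 ≤ ρ) (hρ₁ : ρ ≤ 1) (ht : 0 ≤ t) :
    1 - Real.exp (-t) ≤ t ^ ρ := by
  rcases le_or_gt t 1 with h | h
  · calc 1 - Real.exp (-t) ≤ t := by nlinarith [Real.add_one_le_exp (-t)]
    _ ≤ t ^ ρ := by
        rcases eq_or_lt_of_le ht with rfl | ht'
        · simpa using Real.rpow_nonneg le_rfl ρ
        · calc t = t ^ (1:ℝ) := (Real.rpow_one t).symm
          _ ≤ t ^ ρ := Real.rpow_le_rpow_of_exponent_ge ht' h hρ₁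
  · calc 1 - Real.exp (-t) ≤ 1 := sub_le_self _ (Real.exp_pos _).le
    _ ≤ t ^ ρ := Real.one_le_rpow h.le hρ₀

private lemma core (ρ σ a b c : ℝ) (hρ₀ : 0 ≤ ρ) (hρ₁ : ρ ≤ 1) (hσ : 0 ≤ σ)
    (hb : 0 ≤ b) (hc : a - b ≤ c) :
    Real.exp (σ * a) * Real.exp (σ * b) - Real.exp (σ * c) ≤
      (2 * σ * b) ^ ρ * (Real.exp (σ * a) * Real.exp (σ * b)) := by
  have h1 : Real.exp (σ * (a - b)) ≤ Real.exp (σ * c) :=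
    Real.exp_le_exp.mpr (by nlinarith)
  have h2 : Real.exp (σ * a) * Real.exp (σ * b) - Real.exp (σ * (a - b)) =
      (1 - Real.exp (-(2 * σ * b))) * (Real.exp (σ * a) * Real.exp (σ * b)) := by
    rw [← Real.exp_add, sub_mul, one_mul, ← Real.exp_add]
    ring_nf
  have h3 := one_sub_exp_le ρ (2 * σ * b) hρ₀ hρ₁ (by positivity)
  nlinarith [Real.exp_pos (σ * a), Real.exp_pos (σ * b),
    mul_le_mul_of_nonneg_right h3 (mul_pos (Real.exp_pos (σ * a)) (Real.exp_pos (σ * b))).le]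

/-- For every `ρ ∈ [0,1]` there is a constant `C_ρ > 0` (one may take `C_ρ = 4^ρ`)
such that for all `σ ≥ 0` and all `ξ₁, ξ₂ ∈ ℝ`:
`e^{σ|ξ₁|} e^{σ|ξ₂|} − e^{σ|ξ₁+ξ₂|}
  ≤ C_ρ · σ^ρ · (1+|ξ₁|)^ρ (1+|ξ₂|)^ρ (1+|ξ₁+ξ₂|)^{−ρ} · e^{σ|ξ₁|} e^{σ|ξ₂|}`. -/
theorem exp_mul_sub_exp_le_weight (ρ : ℝ) (hρ₀ : 0 ≤ ρ) (hρ₁ : ρ ≤ 1) :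
    ∃ C : ℝ, 0 < C ∧ C = 4 ^ ρ ∧
      ∀ σ : ℝ, 0 ≤ σ → ∀ ξ₁ ξ₂ : ℝ,
        Real.exp (σ * |ξ₁|) * Real.exp (σ * |ξ₂|) - Real.exp (σ * |ξ₁ + ξ₂|) ≤
          C * σ ^ ρ * ((1 + |ξ₁|) ^ ρ * (1 + |ξ₂|) ^ ρ * (1 + |ξ₁ + ξ₂|) ^ (-ρ)) *
            (Real.exp (σ * |ξ₁|) * Real.exp (σ * |ξ₂|)) := by
  refine ⟨4 ^ ρ, by positivity, rfl, fun σ hσ ξ₁ ξ₂ => ?_⟩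
  set a := |ξ₁| with ha
  set b := |ξ₂| with hb
  set c := |ξ₁ + ξ₂| with hc
  have ha0 : 0 ≤ a := abs_nonneg _
  have hb0 : 0 ≤ b := abs_nonneg _
  have hc0 : 0 ≤ c := abs_nonneg _
  set m := min a b with hm
  have hm0 : 0 ≤ m := le_min ha0 hb0
  -- step 1
  have step1 : Real.exp (σ * a) * Real.exp (σ * b) - Real.exp (σ * c) ≤
      (2 * σ * m) ^ ρ * (Real.exp (σ * a) * Real.exp (σ * b)) := by
    rcases le_total a b with h | h
    · have hm' : m = a := min_eq_left h
      rw [hm']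
      have hcab : b - a ≤ c := by
        have := abs_sub_abs_le_abs_sub ξ₂ (-ξ₁)
        simp only [abs_neg, sub_neg_eq_add] at this
        calc b - a ≤ |ξ₂ + ξ₁| := this
        _ = c := by rw [hc, add_comm]
      have := core ρ σ b a c hρ₀ hρ₁ hσ ha0 hcab
      nlinarith [this]
    · have hm' : m = b := min_eq_right h
      rw [hm']
      have hcab : a - b ≤ c := by
        have := abs_sub_abs_le_abs_sub ξ₁ (-ξ₂)
        simpa [abs_neg, sub_neg_eq_add] using this
      exact core ρ σ a b c hρ₀ hρ₁ hσ hb0 hcab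
  -- step 2: 2σm ≤ σ * (4 (1+a)(1+b)/(1+c))
  have hkey : 2 * σ * m ≤ σ * (4 * ((1+a)*(1+b)) / (1+c)) := by
    have hcb : c ≤ a + b := abs_add_le ξ₁ ξ₂
    have h1c : (0:ℝ) < 1 + c := by linarith
    have h2m : 2 * m * (1 + c) ≤ 4 * ((1+a)*(1+b)) := by
      rcases le_total a b with h | h
      · have : m = a := min_eq_left h
        nlinarith
      · have : m = b := min_eq_right h
        nlinarith
    calc 2 * σ * m = σ * (2 * m) := by ring
      _ ≤ σ * (4 * ((1+a)*(1+b)) / (1+c)) := by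
          refine mul_le_mul_of_nonneg_left ?_ hσ
          rw [le_div_iff₀ h1c]
          linarith
  -- step 3: rpow monotone + expand
  have step3 : (2 * σ * m) ^ ρ ≤
      4 ^ ρ * σ ^ ρ * ((1+a) ^ ρ * (1+b) ^ ρ * (1+c) ^ (-ρ)) := by
    have h1c : (0:ℝ) < 1 + c := by linarith
    have hle := Real.rpow_le_rpow (by positivity) hkey hρ₀
    refine hle.trans_eq ?_
    rw [Real.rpow_neg (by positivity)]
    rw [show σ * (4 * ((1+a)*(1+b)) / (1+c)) = σ * 4 * (1+a) * (1+b) / (1+c) by ring]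
    rw [Real.div_rpow (by positivity) h1c.le,
        Real.mul_rpow (by positivity) (by positivity),
        Real.mul_rpow (by positivity) (by positivity),
        Real.mul_rpow hσ (by norm_num)]
    field_simp
  calc Real.exp (σ * a) * Real.exp (σ * b) - Real.exp (σ * c)
      ≤ (2 * σ * m) ^ ρ * (Real.exp (σ * a) * Real.exp (σ * b)) := step1
    _ ≤ 4 ^ ρ * σ ^ ρ * ((1+a) ^ ρ * (1+b) ^ ρ * (1+c) ^ (-ρ)) *
        (Real.exp (σ * a) * Real.exp (σ * b)) :=
        mul_le_mul_of_nonneg_right step3 (by positivity)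
end
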